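/- Let Cov_Fib[ℓ] denote the length of the shortest cover of the length-ℓ prefix of the infinite Fibonacci word Fib. For every k ≥ 4, Cov_Fib[F_k − 1] = F_k − 1; that is, the prefix of Fib of length F_k − 1 is superprimitive (has no proper cover). -/

import Mathlib

section Defs

variable {α : Type*}

/-- `C` occurs in `T` at starting position `i`. -/
def OccursAt (C T : List α) (i : ℕ) : Prop :=
  i + C.length ≤ T.length ∧ (T.drop i).take C.length = C

/-- `C` is a cover of `T`: `C` occurs in `T` and every position of `T`
lies within an occurrence of `C`. -/
def IsCover (C T : List α) : Prop :=
  (∃ i, OccursAt C T i) ∧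
    ∀ q, q < T.length → ∃ i, OccursAt C T i ∧ i ≤ q ∧ q < i + C.length

/-- A border of `T` is both a prefix and a suffix of `T`. -/
def IsBorder (B T : List α) : Prop := B <+: T ∧ B <:+ T

/-- `p` is a period of `U`: `U[i] = U[i+p]` for all `0 ≤ i < |U| - p`. -/
def IsPeriod (p : ℕ) (U : List α) : Prop :=
  0 < p ∧ ∀ i, i + p < U.length → U[i]? = U[i + p]?

/-- `U` is aperiodic: its smallest period `p` satisfies `2p > |U|`
(equivalently, every period `p` of `U` satisfies `2p > |U|`). -/
def StrAperiodic (U : List α) : Prop := ∀ p, IsPeriod p U → U.length < 2 * p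

/-- A nonempty string `X` is primitive if `X = Y^t` implies `t = 1`. -/
def StrPrimitive (X : List α) : Prop :=
  X ≠ [] ∧ ∀ (Y : List α) (t : ℕ), X = (List.replicate t Y).flatten → t = 1

/-- A string is superprimitive if it has no proper cover. -/
def Superprimitive (T : List α) : Prop :=
  ¬ ∃ C : List α, IsCover C T ∧ C.length < T.length

/-- The length of the shortest cover of `T`. -/
noncomputable def covLen (T : List α) : ℕ :=
  sInf {c | ∃ C : List α, C.length = c ∧ IsCover C T}

/-- `{a, a+p, ..., a+(t-1)p}` is a maximal arithmetic progression with
difference `p` inside the set `S`. -/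
def MaxProg (S : Set ℕ) (p a t : ℕ) : Prop :=
  0 < t ∧ (∀ r, r < t → a + r * p ∈ S) ∧ (∀ b, b + p = a → b ∉ S) ∧ a + t * p ∉ S

end Defs

/-- Fibonacci strings over `Bool` (`true` = a, `false` = b):
`Fib_0 = b`, `Fib_1 = a`, `Fib_m = Fib_{m-1} Fib_{m-2}`. -/
def fibWord : ℕ → List Bool
  | 0 => [false]
  | 1 => [true]
  | (m + 2) => fibWord (m + 1) ++ fibWord m

/-- Fibonacci numbers `F_k = |Fib_k|`: `F_0 = F_1 = 1`, `F_2 = 2`, `F_3 = 3`, ... -/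
def F (k : ℕ) : ℕ := (fibWord k).length

/-- The `n`-th letter of the infinite Fibonacci word (each `Fib_m`, `m ≥ 1`,
is a prefix of the infinite word, and `F_{n+2} > n`). -/
def fibInf (n : ℕ) : Bool := (fibWord (n + 2)).getD n false

/-- The length-`ℓ` prefix `Fib[0..ℓ)` of the infinite Fibonacci word. -/
def fibPrefix (ℓ : ℕ) : List Bool := (List.range ℓ).map fibInf

/-- `Cov_Fib[ℓ]`: the length of the shortest cover of `Fib[0..ℓ)`. -/
noncomputable def covFib (ℓ : ℕ) : ℕ := covLen (fibPrefix ℓ)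

/-!
Let `T = Fib[0..F_k - 1)`. A proper cover `C` of `T` is a border of `T`, so `|T| - |C|` is a
period of `T`; and the occurrence of `C` covering position `|C|` starts at some `0 < i ≤ |C|`,
so `i` is a period of `Fib[0..|C| + i)`.

Two facts about Fibonacci words drive the argument: `Fib_{j+2} Fib_{j+1}` and `Fib_{j+1} Fib_{j+2}`
differ only in their last two letters, so `F_{j+1}` is a period of `Fib[0..F_{j+3} - 2)`; and the
second-to-last letters of the `Fib_j` alternate, so this period breaks down on
`Fib[0..F_{j+3} - 1)`. Subtracting the period `F_{j+1}` from a longer period passes to a shorter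
prefix, and induction along this reduction shows that every period `p ≤ F_k - 2` of `T` has the
form `F_k - F_m`, which forces `|C| = F_m - 1`, and that `Fib[0..F_m - 1)` does not reoccur at any
position `0 < i < F_m`. These two conclusions contradict each other.
-/

section

variable {α : Type*} {C T : List α}

lemma List.HasPeriod.take_length_sub {w : List α} {p q : ℕ} (hq : w.HasPeriod q)
    (hp : w.HasPeriod p) (hqp : q ≤ p) : (w.take (w.length - q)).HasPeriod (p - q) := by
  have h := hq.drop_of_hasPeriod_add (k := p - q) (by rwa [Nat.sub_add_cancel hqp])
  rwa [List.prefix_iff_eq_take.1 hq.drop_prefix, List.length_drop] at h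

lemma OccursAt.hasPeriod_take {i : ℕ} (h₀ : OccursAt C T 0) (hi : OccursAt C T i) :
    (T.take (i + C.length)).HasPeriod i := by
  rw [List.hasPeriod_iff_getElem?]
  intro r hr
  simp only [List.length_take] at hr
  have hrC : r < C.length := by omega
  have e₀ := congrArg (·[r]?) h₀.2
  have eᵢ := congrArg (·[r]?) hi.2
  simp only [List.getElem?_take_of_lt hrC, List.getElem?_drop, List.drop_zero] at e₀ eᵢ
  rw [List.getElem?_take_of_lt (by omega), List.getElem?_take_of_lt (by omega), e₀, ← eᵢ,
    Nat.add_comm]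

lemma IsCover.occursAt_zero (h : IsCover C T) (hT : T ≠ []) : OccursAt C T 0 := by
  obtain ⟨i, hi, hi0, -⟩ := h.2 0 (List.length_pos_of_ne_nil hT)
  rwa [Nat.le_zero.1 hi0] at hi

lemma IsCover.occursAt_length_sub (h : IsCover C T) (hT : T ≠ []) :
    OccursAt C T (T.length - C.length) := by
  have := List.length_pos_of_ne_nil hT
  obtain ⟨i, hi, -, hlt⟩ := h.2 (T.length - 1) (by omega)
  rwa [show i = T.length - C.length by have := hi.1; omega] at hi

lemma IsCover.exists_pos_occursAt (h : IsCover C T) (hC : C.length < T.length) :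
    ∃ i, 0 < i ∧ i ≤ C.length ∧ OccursAt C T i := by
  obtain ⟨i, hi, hle, hlt⟩ := h.2 C.length hC
  exact ⟨i, by omega, hle, hi⟩

lemma isCover_self (T : List α) : IsCover T T :=
  ⟨⟨0, by simp [OccursAt]⟩, fun q hq => ⟨0, by simp [OccursAt], q.zero_le, by simpa⟩⟩

lemma covLen_eq_length (h : Superprimitive T) : covLen T = T.length := by
  refine le_antisymm (Nat.sInf_le ⟨T, rfl, isCover_self T⟩)
    (le_csInf ⟨_, T, rfl, isCover_self T⟩ ?_)
  rintro _ ⟨C, rfl, hC⟩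
  exact not_lt.1 fun hlt => h ⟨C, hC, hlt⟩

end

lemma fibWord_add_two (m : ℕ) : fibWord (m + 2) = fibWord (m + 1) ++ fibWord m := rfl

lemma F_add_two (m : ℕ) : F (m + 2) = F (m + 1) + F m := by
  simp [F, fibWord_add_two, Nat.add_comm]

lemma F_eq_fib (m : ℕ) : F m = Nat.fib (m + 1) := by
  induction m using Nat.strong_induction_on with
  | _ m ih =>
    match m with
    | 0 | 1 => rfl
    | m + 2 =>
      rw [F_add_two, ih m (by omega), ih (m + 1) (by omega), Nat.add_comm]
      exact (Nat.fib_add_two (n := m + 1)).symm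

lemma F_pos (m : ℕ) : 0 < F m := by
  rw [F_eq_fib]; exact Nat.fib_pos.2 m.succ_pos

lemma F_mono : Monotone F := fun a b h => by
  simp only [F_eq_fib]; exact Nat.fib_mono (by omega)

lemma F_lt_F_of_lt {a b : ℕ} (h : a < b) : F (a + 1) < F (b + 1) := by
  simp only [F_eq_fib]; exact Nat.fib_add_two_strictMono h

lemma two_le_F (m : ℕ) : 2 ≤ F (m + 2) := F_mono (by omega : 2 ≤ m + 2)

lemma lt_F_add_two (n : ℕ) : n < F (n + 2) := by
  have h₁ := Nat.le_fib_add_one (n + 2)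
  have h₂ : Nat.fib (n + 2) < Nat.fib (n + 3) := Nat.fib_add_two_strictMono (by omega)
  rw [F_eq_fib]; show n < Nat.fib (n + 3); omega

lemma fibWord_prefix_of_le {a b : ℕ} (ha : 1 ≤ a) (hab : a ≤ b) :
    fibWord a <+: fibWord b := by
  induction b, hab using Nat.le_induction with
  | base => exact List.prefix_refl _
  | succ b hab ih =>
    obtain ⟨c, rfl⟩ : ∃ c, b = c + 1 := ⟨b - 1, by omega⟩
    exact ih.trans (List.prefix_append _ _)

lemma getElem?_fibWord {m i : ℕ} (hm : 1 ≤ m) (hi : i < F m) :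
    (fibWord m)[i]? = some (fibInf i) := by
  have key {u v : List Bool} (huv : u <+: v) (hi : i < u.length) : v[i]? = u[i]? := by
    obtain ⟨w, rfl⟩ := huv; exact List.getElem?_append_left hi
  have hi' : i < (fibWord (i + 2)).length := lt_F_add_two i
  rw [fibInf, List.getD_eq_getElem?_getD]
  rcases le_total m (i + 2) with h | h
  · rw [← key (fibWord_prefix_of_le hm h) hi, List.getElem?_eq_getElem hi']; rfl
  · rw [key (fibWord_prefix_of_le (by omega) h) hi', List.getElem?_eq_getElem hi']; rfl

lemma fibInf_F_add (j : ℕ) {i : ℕ} (hi : i < F (j + 1)) :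
    fibInf (F (j + 2) + i) = fibInf i := by
  have h3 : F (j + 3) = F (j + 2) + F (j + 1) := F_add_two _
  have h := getElem?_fibWord (m := j + 3) (by omega) (i := F (j + 2) + i) (by omega)
  rw [fibWord_add_two, List.getElem?_append_right (by simp [F]),
    getElem?_fibWord (by omega) (by simpa [F] using hi)] at h
  simpa [F] using h.symm

lemma fibInf_F (j : ℕ) : fibInf (F (j + 2)) = true :=
  (fibInf_F_add j (F_pos (j + 1))).trans rfl

lemma fibInf_F_succ_sub_two (j : ℕ) : fibInf (F (j + 3) - 2) = !fibInf (F (j + 2) - 2) := by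
  induction j with
  | zero => decide
  | succ j ih =>
    have h4 : F (j + 4) = F (j + 3) + F (j + 2) := F_add_two _
    have : 2 ≤ F (j + 2) := two_le_F j
    show fibInf (F (j + 4) - 2) = !fibInf (F (j + 3) - 2)
    rw [show F (j + 4) - 2 = F (j + 3) + (F (j + 2) - 2) by omega,
      fibInf_F_add (j + 1) (by show _ < F (j + 2); omega), ih, Bool.not_not]

lemma take_fibWord_append_comm (j : ℕ) :
    (fibWord (j + 2) ++ fibWord (j + 1)).take (F (j + 3) - 2) =
      (fibWord (j + 1) ++ fibWord (j + 2)).take (F (j + 3) - 2) := by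
  induction j with
  | zero => decide
  | succ j ih =>
    have h4 : F (j + 4) = F (j + 3) + F (j + 2) := F_add_two _
    have : 2 ≤ F (j + 3) := two_le_F _
    have e : F (j + 4) - 2 = (fibWord (j + 2)).length + (F (j + 3) - 2) := by
      change _ = F (j + 2) + _; omega
    change (fibWord (j + 2) ++ fibWord (j + 1) ++ fibWord (j + 2)).take (F (j + 4) - 2) =
      (fibWord (j + 2) ++ (fibWord (j + 2) ++ fibWord (j + 1))).take (F (j + 4) - 2)
    rw [e, List.append_assoc, List.take_length_add_append, ← ih, List.take_length_add_append]

lemma fibPrefix_length (L : ℕ) : (fibPrefix L).length = L := by simp [fibPrefix]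

lemma take_fibPrefix {L L' : ℕ} (h : L' ≤ L) : (fibPrefix L).take L' = fibPrefix L' := by
  rw [fibPrefix, ← List.map_take, List.take_range, Nat.min_eq_left h, fibPrefix]

lemma getElem?_fibPrefix {L i : ℕ} (h : i < L) : (fibPrefix L)[i]? = some (fibInf i) := by
  simp [fibPrefix, List.getElem?_range h]

lemma hasPeriod_fibPrefix_iff {p L : ℕ} :
    (fibPrefix L).HasPeriod p ↔ ∀ i, i + p < L → fibInf i = fibInf (i + p) := by
  simp only [List.hasPeriod_iff_getElem?, fibPrefix_length]
  refine forall_congr' fun i => ⟨fun h hi => ?_, fun h hi => ?_⟩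
  · simpa [getElem?_fibPrefix, hi, (by omega : i < L)] using h (by omega)
  · simpa [getElem?_fibPrefix, (by omega : i + p < L), (by omega : i < L)] using h (by omega)

lemma hasPeriod_fibPrefix_of_le {p L L' : ℕ} (h : (fibPrefix L).HasPeriod p) (hL : L' ≤ L) :
    (fibPrefix L').HasPeriod p :=
  h.infix (take_fibPrefix hL ▸ List.take_prefix _ _).isInfix

lemma hasPeriod_fibPrefix_sub {p q L M₁ M₂ : ℕ} (hq : (fibPrefix M₁).HasPeriod q)
    (hp : (fibPrefix M₂).HasPeriod p) (hqp : q ≤ p) (h₁ : L + q ≤ M₁)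
    (h₂ : L + q ≤ M₂) : (fibPrefix L).HasPeriod (p - q) := by
  have h := (hasPeriod_fibPrefix_of_le hq h₁).take_length_sub
    (hasPeriod_fibPrefix_of_le hp h₂) hqp
  rwa [fibPrefix_length, Nat.add_sub_cancel, take_fibPrefix (by omega)] at h

lemma hasPeriod_fibPrefix_F (j : ℕ) : (fibPrefix (F (j + 3) - 2)).HasPeriod (F (j + 1)) := by
  have h3 : F (j + 3) = F (j + 2) + F (j + 1) := F_add_two _
  rw [hasPeriod_fibPrefix_iff]
  intro i hi
  have key := congrArg (·[i + F (j + 1)]?) (take_fibWord_append_comm j)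
  simp only [List.getElem?_take_of_lt hi] at key
  have hl : (fibWord (j + 1)).length = F (j + 1) := rfl
  rw [show fibWord (j + 2) ++ fibWord (j + 1) = fibWord (j + 3) from rfl,
    getElem?_fibWord (by omega) (by omega), List.getElem?_append_right (by omega), hl,
    Nat.add_sub_cancel, getElem?_fibWord (by omega) (by omega)] at key
  exact (Option.some_inj.1 key).symm

lemma not_hasPeriod_fibPrefix_F (j : ℕ) :
    ¬ (fibPrefix (F (j + 3) - 1)).HasPeriod (F (j + 1)) := by
  have h3 : F (j + 3) = F (j + 2) + F (j + 1) := F_add_two _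
  have : 2 ≤ F (j + 2) := two_le_F j
  rw [hasPeriod_fibPrefix_iff]
  intro h
  have h' := h (F (j + 2) - 2) (by omega)
  rw [show F (j + 2) - 2 + F (j + 1) = F (j + 3) - 2 by omega, fibInf_F_succ_sub_two] at h'
  exact Bool.eq_not_self _ |>.1 h'

lemma not_hasPeriod_fibPrefix_F_sub_one (j : ℕ) {L : ℕ} (hL : F (j + 2) < L) :
    ¬ (fibPrefix L).HasPeriod (F (j + 2) - 1) := by
  have := F_pos (j + 2)
  rw [hasPeriod_fibPrefix_iff]
  intro h
  have h' := h 1 (by omega)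
  rw [show 1 + (F (j + 2) - 1) = F (j + 2) by omega, fibInf_F] at h'
  exact absurd h' (by decide)

theorem not_hasPeriod_fibPrefix_F_sub_one_add {m p : ℕ} (hp : 0 < p) (hpm : p < F m) :
    ¬ (fibPrefix (F m - 1 + p)).HasPeriod p := by
  induction m using Nat.strong_induction_on generalizing p with
  | _ m ih =>
  match m with
  | 0 | 1 => exact absurd hpm (by change ¬ p < 1; omega)
  | m + 2 =>
    have h2 : F (m + 2) = F (m + 1) + F m := F_add_two m
    have h3 : F (m + 3) = F (m + 2) + F (m + 1) := F_add_two _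
    have : F m ≤ F (m + 1) := F_mono m.le_succ
    have := F_pos m
    rcases lt_trichotomy p (F (m + 1)) with hlt | rfl | hgt
    · exact fun h => ih (m + 1) (by omega) hp hlt (hasPeriod_fibPrefix_of_le h (by omega))
    · rw [show F (m + 2) - 1 + F (m + 1) = F (m + 3) - 1 by omega]
      exact not_hasPeriod_fibPrefix_F m
    · exact fun h => ih m (by omega) (by omega) (by omega)
        (hasPeriod_fibPrefix_sub (hasPeriod_fibPrefix_F m) h hgt.le (by omega) (by omega))

theorem not_hasPeriod_fibPrefix_F_sub_F {m j : ℕ} (hmj : m < j) :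
    ¬ (fibPrefix (F (m + 4) - 1 + (F (j + 2) - F (m + 2)))).HasPeriod (F (j + 2) - F (m + 2)) := by
  induction j using Nat.strong_induction_on with
  | _ j ih =>
  have h4 : F (m + 4) = F (m + 3) + F (m + 2) := F_add_two _
  have h3 : F (m + 3) = F (m + 2) + F (m + 1) := F_add_two _
  have h5 : F (m + 5) = F (m + 4) + F (m + 3) := F_add_two _
  rcases (by omega : j = m + 1 ∨ j = m + 2 ∨ m + 3 ≤ j) with rfl | rfl | hj
  · show ¬ (fibPrefix (F (m + 4) - 1 + (F (m + 3) - F (m + 2)))).HasPeriod (F (m + 3) - F (m + 2))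
    rw [show F (m + 3) - F (m + 2) = F (m + 1) by omega]
    exact fun h => not_hasPeriod_fibPrefix_F m (hasPeriod_fibPrefix_of_le h (by omega))
  · show ¬ (fibPrefix (F (m + 4) - 1 + (F (m + 4) - F (m + 2)))).HasPeriod (F (m + 4) - F (m + 2))
    rw [show F (m + 4) - F (m + 2) = F (m + 3) by omega,
      show F (m + 4) - 1 + F (m + 3) = F (m + 5) - 1 by omega]
    exact not_hasPeriod_fibPrefix_F (m + 2)
  · obtain ⟨t, rfl⟩ : ∃ t, j = t + 2 := ⟨j - 2, by omega⟩
    show ¬ (fibPrefix (F (m + 4) - 1 + (F (t + 4) - F (m + 2)))).HasPeriod (F (t + 4) - F (m + 2))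
    have ht4 : F (t + 4) = F (t + 3) + F (t + 2) := F_add_two _
    have ht5 : F (t + 5) = F (t + 4) + F (t + 3) := F_add_two _
    have hmt₂ : F (m + 2) < F (t + 2) := F_lt_F_of_lt (by omega : m + 1 < t + 1)
    have hmt₄ : F (m + 4) ≤ F (t + 3) := F_mono (by omega)
    have := F_pos (m + 2)
    have hF : (fibPrefix (F (t + 5) - 2)).HasPeriod (F (t + 3)) := hasPeriod_fibPrefix_F _
    intro h
    have h' := hasPeriod_fibPrefix_sub hF h (by omega)
      (L := F (m + 4) - 1 + (F (t + 2) - F (m + 2))) (by omega) (by omega)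
    rw [show F (t + 4) - F (m + 2) - F (t + 3) = F (t + 2) - F (m + 2) by omega] at h'
    exact ih t (by omega) (by omega) h'

theorem exists_add_F_eq_of_hasPeriod_fibPrefix {k p : ℕ} (hp : 0 < p) (hpk : p + 2 ≤ F k)
    (h : (fibPrefix (F k - 1)).HasPeriod p) : ∃ m, p + F (m + 2) = F k := by
  induction k using Nat.strong_induction_on generalizing p with
  | _ k ih =>
  match k with
  | 0 | 1 => exact absurd hpk (by change ¬ p + 2 ≤ 1; omega)
  | 2 => exact absurd hpk (by change ¬ p + 2 ≤ 2; omega)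
  | 3 => exact ⟨0, by change p + 2 ≤ 3 at hpk; change p + 2 = 3; omega⟩
  | t + 4 =>
    have ht3 : F (t + 3) = F (t + 2) + F (t + 1) := F_add_two _
    have ht4 : F (t + 4) = F (t + 3) + F (t + 2) := F_add_two _
    have ht5 : F (t + 5) = F (t + 4) + F (t + 3) := F_add_two _
    have : 2 ≤ F (t + 2) := two_le_F t
    rcases lt_trichotomy p (F (t + 3)) with hlt | rfl | hgt
    · rcases (by omega : p = F (t + 3) - 1 ∨ p + 2 ≤ F (t + 3)) with rfl | hpt
      · have hF : F (t + 3) < F (t + 4) - 1 := by omega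
        exact absurd h (not_hasPeriod_fibPrefix_F_sub_one (t + 1) hF)
      have h' := hasPeriod_fibPrefix_of_le h (L' := F (t + 3) - 1) (by omega)
      obtain ⟨m, hm⟩ := ih (t + 3) (by omega) hp hpt h'
      have hmt : m ≤ t := by
        by_contra! hmt
        have : F (t + 3) ≤ F (m + 2) := F_mono (by omega)
        omega
      rcases (by omega : m = t ∨ m + 1 = t ∨ m + 2 ≤ t) with rfl | hmt₁ | hmt₂
      · rw [show p = F (m + 1) by omega] at h'
        exact absurd h' (not_hasPeriod_fibPrefix_F m)
      · have : F (m + 2) = F (t + 1) := by rw [show m + 2 = t + 1 by omega]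
        exact ⟨t + 1, by show p + F (t + 3) = F (t + 4); omega⟩
      · have hm₄ : F (m + 4) ≤ F (t + 2) := F_mono (by omega)
        have hE : ¬ (fibPrefix (F (m + 4) - 1 + (F (t + 3) - F (m + 2)))).HasPeriod
            (F (t + 3) - F (m + 2)) := not_hasPeriod_fibPrefix_F_sub_F (j := t + 1) (by omega)
        rw [show p = F (t + 3) - F (m + 2) by omega] at h
        exact (hE (hasPeriod_fibPrefix_of_le h (by omega))).elim
    · exact ⟨t, ht4.symm⟩
    · have hF : (fibPrefix (F (t + 5) - 2)).HasPeriod (F (t + 3)) := hasPeriod_fibPrefix_F _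
      obtain ⟨m, hm⟩ := ih (t + 2) (by omega) (p := p - F (t + 3)) (by omega) (by omega)
        (hasPeriod_fibPrefix_sub hF h hgt.le (by omega) (by omega))
      exact ⟨m, by omega⟩

theorem superprimitive_fibPrefix_F_sub_one (k : ℕ) : Superprimitive (fibPrefix (F k - 1)) := by
  rintro ⟨C, hC, hCT⟩
  have hT : fibPrefix (F k - 1) ≠ [] := List.ne_nil_of_length_pos (by omega)
  rw [fibPrefix_length] at hCT
  have h₀ := hC.occursAt_zero hT
  obtain ⟨i, hi₀, hic, hi⟩ := hC.exists_pos_occursAt (by rwa [fibPrefix_length])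
  have hborder := h₀.hasPeriod_take (hC.occursAt_length_sub hT)
  rw [fibPrefix_length, Nat.sub_add_cancel hCT.le, take_fibPrefix le_rfl] at hborder
  obtain ⟨m, hm⟩ := exists_add_F_eq_of_hasPeriod_fibPrefix (by omega) (by omega) hborder
  have hocc := h₀.hasPeriod_take hi
  rw [take_fibPrefix (by simpa [fibPrefix_length] using hi.1)] at hocc
  apply not_hasPeriod_fibPrefix_F_sub_one_add hi₀ (m := m + 2) (by omega)
  rwa [show F (m + 2) - 1 + i = i + C.length by omega]

theorem stmt7_general (k : ℕ) :
    covFib (F k - 1) = F k - 1 ∧ Superprimitive (fibPrefix (F k - 1)) := by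
  have h := superprimitive_fibPrefix_F_sub_one k
  exact ⟨by rw [covFib, covLen_eq_length h, fibPrefix_length], h⟩

/-- For every `k ≥ 4`, `Cov_Fib[F_k - 1] = F_k - 1`; that is, the prefix of
the infinite Fibonacci word of length `F_k - 1` is superprimitive. -/
theorem stmt7 (k : ℕ) (hk : 4 ≤ k) :
    covFib (F k - 1) = F k - 1 ∧ Superprimitive (fibPrefix (F k - 1)) :=
  stmt7_general k
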